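/- (Achievability II.) Fix a prime q, integers d ≥ 2 and r ≥ 1, reals ε and η with 0 ≤ ε < η < (q−1)/q, and a real constant C₂ > 1. Set γ = (ln q) / ( 2·((q−1)/q − η)² ). For each n ≥ 1, let T*_n be any (n;d)-tensor over 𝔽_q of rank at most r, let m(n) be an integer with m(n) ≥ C₂·γ·n·r·d, take i.i.d. uniform sensing tensors M^{(1)},…,M^{(m(n))}, noisy observations ỹ = y_{T*_n} + z through the q-ary symmetric channel with error probability ε, and threshold τ_n = ⌊η·m(n)⌋. Let E_n be the event that d_H(y_{T*_n}, ỹ) > τ_n or that some tensor T ≠ T*_n of rank at most r satisfies d_H(y_T, ỹ) ≤ τ_n. Then Pr(E_n) → 0 as n → ∞. -/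

import Mathlib

open scoped Classical

/-- An `(n;d)`-tensor over `𝔽_q`: a map `[n]^d → 𝔽_q`. -/
abbrev Tensor (q n d : ℕ) := (Fin d → Fin n) → ZMod q

/-- `T` has rank at most `r` if it is a sum of `r` outer products of vectors. -/
def rankLE (q n d r : ℕ) (T : Tensor q n d) : Prop :=
  ∃ u : Fin r → Fin d → (Fin n → ZMod q),
    ∀ idx : Fin d → Fin n, T idx = ∑ i : Fin r, ∏ j : Fin d, u i j (idx j)

/-- The tensor inner product `⟨M, T⟩ = Σ_idx M(idx)·T(idx)`. -/
def tinner {q n d : ℕ} [Fact q.Prime] (M T : Tensor q n d) : ZMod q :=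
  ∑ idx : Fin d → Fin n, M idx * T idx

/-- Probability weight of a noise symbol of the `q`-ary symmetric channel with error
probability `ε`. -/
noncomputable def noiseW (q : ℕ) [Fact q.Prime] (ε : ℝ) (z : ZMod q) : ℝ :=
  if z = 0 then 1 - ε else ε / ((q : ℝ) - 1)

/-! The error event is the union of two. The noise corrupts each measurement independently with
probability `ε < η`, so by Hoeffding's inequality it corrupts more than `⌊η m⌋` of them with
probability at most `exp (-2 (η - ε)² m)`. For a fixed `T ≠ T*` the value `⟨M, T - T*⟩` is uniform
on `𝔽_q`, so each measurement of `T` disagrees with `ỹ` with probability exactly `(q - 1) / q > η`,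
and `T` lies within `⌊η m⌋` of `ỹ` with probability at most `exp (-2 ((q - 1) / q - η)² m)`.
A union bound over the at most `q ^ (n r d)` tensors of rank at most `r` costs a factor
`exp (n r d ln q)`, which `m ≥ C₂ γ n r d` with `C₂ > 1` beats. -/

open Real Finset Filter Topology MeasureTheory ProbabilityTheory

lemma one_sub_add_mul_exp_le {p : ℝ} (hp : p ∈ Set.Icc (0 : ℝ) 1) (t : ℝ) :
    1 - p + p * exp t ≤ exp (p * t + t ^ 2 / 8) := by
  set μ : Measure ℝ := bernoulliMeasure 1 0 ⟨p, hp⟩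
  have hbound : ∀ᵐ x ∂μ, x ∈ Set.Icc (0 : ℝ) 1 := by
    rw [ae_iff]
    exact bernoulliMeasure_apply_of_notMem_of_notMem _ measurableSet_Icc.compl (by simp) (by simp)
  have hsub := (hasSubgaussianMGF_of_mem_Icc measurable_id.aemeasurable hbound).mgf_le t
  have hmean : μ[id] = p := by simp [μ, integral_bernoulliMeasure]
  have hmgf : mgf (fun x => id x - μ[id]) μ t = exp (-(p * t)) * (1 - p + p * exp t) := by
    rw [mgf, integral_bernoulliMeasure, hmean]
    simp only [id, smul_eq_mul]
    rw [show t * (1 - p) = -(p * t) + t by ring, show t * (0 - p) = -(p * t) by ring, exp_add]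
    ring
  rw [hmgf, ← le_div_iff₀' (exp_pos _), ← exp_sub] at hsub
  refine hsub.trans_eq (congrArg exp ?_)
  norm_num [← coe_nnnorm]
  ring

section IidProb

variable {α : Type*} [Fintype α]

noncomputable def iidProb (w : α → ℝ) (N : ℕ) (P : (Fin N → α) → Prop) : ℝ :=
  ∑ z : Fin N → α, (∏ k, w (z k)) * if P z then 1 else 0

variable {w : α → ℝ} {N : ℕ}

lemma iidProb_nonneg (hw : 0 ≤ w) (P : (Fin N → α) → Prop) : 0 ≤ iidProb w N P :=
  sum_nonneg fun z _ => mul_nonneg (prod_nonneg fun k _ => hw _) (by split_ifs <;> norm_num)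

lemma iidProb_mono (hw : 0 ≤ w) {P Q : (Fin N → α) → Prop} (h : ∀ z, P z → Q z) :
    iidProb w N P ≤ iidProb w N Q := by
  refine sum_le_sum fun z _ => mul_le_mul_of_nonneg_left ?_ (prod_nonneg fun k _ => hw _)
  by_cases hP : P z
  · simp [hP, h z hP]
  · simp only [hP, if_false]; split_ifs <;> norm_num

lemma iidProb_or_le (hw : 0 ≤ w) (P Q : (Fin N → α) → Prop) :
    iidProb w N (fun z => P z ∨ Q z) ≤ iidProb w N P + iidProb w N Q := by
  rw [iidProb, iidProb, iidProb, ← sum_add_distrib]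
  refine sum_le_sum fun z _ => ?_
  rw [← mul_add]
  refine mul_le_mul_of_nonneg_left ?_ (prod_nonneg fun k _ => hw _)
  split_ifs <;> simp_all

lemma iidProb_exists_le (hw : 0 ≤ w) {β : Type*} (s : Finset β) (P : β → (Fin N → α) → Prop) :
    iidProb w N (fun z => ∃ b ∈ s, P b z) ≤ ∑ b ∈ s, iidProb w N (P b) := by
  simp only [iidProb]
  rw [sum_comm]
  refine sum_le_sum fun z _ => ?_
  rw [← mul_sum]
  refine mul_le_mul_of_nonneg_left ?_ (prod_nonneg fun k _ => hw _)
  split_ifs with h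
  · obtain ⟨b, hb, hPb⟩ := h
    exact (if_pos hPb).symm.le.trans
      (single_le_sum (f := fun b => if P b z then (1 : ℝ) else 0)
        (fun b _ => by split_ifs <;> norm_num) hb)
  · exact sum_nonneg fun b _ => by split_ifs <;> norm_num

lemma iidProb_prod_uniform {β γ : Type*} [Fintype β] [Fintype γ] (v : γ → ℝ) (N : ℕ)
    (P : (Fin N → β) → (Fin N → γ) → Prop) [∀ x y, Decidable (P x y)] :
    iidProb (fun x : β × γ => v x.2 / Fintype.card β) N
        (fun ζ => P (fun k => (ζ k).1) (fun k => (ζ k).2))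
      = (∑ x : Fin N → β, ∑ y : Fin N → γ, (∏ k, v (y k)) * if P x y then 1 else 0) /
          (Fintype.card β : ℝ) ^ N := by
  rw [← Fintype.sum_prod_type', sum_div,
    ← (Equiv.arrowProdEquivProdArrow (Fin N) (fun _ => β) (fun _ => γ)).sum_comp]
  refine sum_congr rfl fun ζ _ => ?_
  simp only [prod_div_distrib, prod_const, card_univ, Fintype.card_fin]
  rw [div_mul_eq_mul_div]
  congr

end IidProb

section Hoeffding

variable {α : Type*} [Fintype α] {w : α → ℝ} {N : ℕ}

lemma sum_mul_exp_mul_ite (hw1 : ∑ a, w a = 1) (A : α → Prop) [DecidablePred A] (t : ℝ) :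
    ∑ a, w a * exp (t * if A a then 1 else 0)
      = 1 - (∑ a with A a, w a) + (∑ a with A a, w a) * exp t := by
  have hterm : ∀ a, w a * exp (t * if A a then 1 else 0)
      = w a + (exp t - 1) * if A a then w a else 0 := fun a => by
    split_ifs <;> simp; ring
  simp only [hterm, sum_add_distrib, ← mul_sum, ← sum_filter, hw1]
  ring

lemma sum_filter_mem_Icc (hw : 0 ≤ w) (hw1 : ∑ a, w a = 1) (A : α → Prop) [DecidablePred A] :
    ∑ a with A a, w a ∈ Set.Icc (0 : ℝ) 1 :=
  ⟨sum_nonneg fun a _ => hw a, hw1 ▸ sum_le_univ_sum_of_nonneg hw⟩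

lemma iidProb_le_exp_of_mul_le (hw : 0 ≤ w) (hw1 : ∑ a, w a = 1) (A : α → Prop)
    [DecidablePred A] {P : (Fin N → α) → Prop} {t s : ℝ}
    (hP : ∀ z, P z → t * s ≤ t * #{k | A (z k)}) :
    iidProb w N P ≤ exp (N * ((∑ a with A a, w a) * t + t ^ 2 / 8) - t * s) := by
  set p := ∑ a with A a, w a
  have hpoint : ∀ z : Fin N → α, (∏ k, w (z k)) * (if P z then 1 else 0)
      ≤ exp (-(t * s)) * ∏ k, w (z k) * exp (t * if A (z k) then 1 else 0) := fun z => by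
    have hcount : ((#{k | A (z k)} : ℕ) : ℝ) = ∑ k, if A (z k) then 1 else 0 := by
      rw [card_filter]; push_cast; rfl
    rw [prod_mul_distrib, ← exp_sum, ← mul_sum, ← hcount, mul_left_comm, ← exp_add]
    refine mul_le_mul_of_nonneg_left ?_ (prod_nonneg fun k _ => hw _)
    split_ifs with hz
    · exact one_le_exp (by linarith [hP z hz])
    · exact (exp_pos _).le
  calc iidProb w N P
      ≤ ∑ z : Fin N → α, exp (-(t * s)) * ∏ k, w (z k) * exp (t * if A (z k) then 1 else 0) :=
        sum_le_sum fun z _ => hpoint z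
    _ = exp (-(t * s)) * (1 - p + p * exp t) ^ N := by
        rw [← mul_sum, ← sum_mul_exp_mul_ite hw1,
          ← Fintype.prod_sum fun (_ : Fin N) a => w a * exp (t * if A a then 1 else 0),
          prod_const, card_univ, Fintype.card_fin]
    _ ≤ exp (-(t * s)) * exp (p * t + t ^ 2 / 8) ^ N := by
        gcongr
        · linarith [mul_nonneg (sum_filter_mem_Icc hw hw1 A).1 (exp_pos t).le,
            (sum_filter_mem_Icc hw hw1 A).2]
        · exact one_sub_add_mul_exp_le (sum_filter_mem_Icc hw hw1 A) t
    _ = exp (N * (p * t + t ^ 2 / 8) - t * s) := by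
        rw [← exp_nat_mul, ← exp_add]; ring_nf

lemma iidProb_add_mul_le_card_le (hw : 0 ≤ w) (hw1 : ∑ a, w a = 1) (A : α → Prop)
    [DecidablePred A] {δ : ℝ} (hδ : 0 ≤ δ) :
    iidProb w N (fun z => ((∑ a with A a, w a) + δ) * N ≤ #{k | A (z k)})
      ≤ exp (-(2 * δ ^ 2 * N)) := by
  refine (iidProb_le_exp_of_mul_le hw hw1 A (t := 4 * δ)
    fun z hz => mul_le_mul_of_nonneg_left hz (by positivity)).trans_eq ?_
  ring_nf

lemma iidProb_card_le_sub_mul_le (hw : 0 ≤ w) (hw1 : ∑ a, w a = 1) (A : α → Prop)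
    [DecidablePred A] {δ : ℝ} (hδ : 0 ≤ δ) :
    iidProb w N (fun z => (#{k | A (z k)} : ℝ) ≤ ((∑ a with A a, w a) - δ) * N)
      ≤ exp (-(2 * δ ^ 2 * N)) := by
  refine (iidProb_le_exp_of_mul_le hw hw1 A (t := -(4 * δ))
    fun z hz => mul_le_mul_of_nonpos_left hz (by linarith)).trans_eq ?_
  ring_nf

end Hoeffding

section Noise

variable {q : ℕ} [Fact q.Prime] {ε : ℝ}

lemma noiseW_nonneg (hε : ε ∈ Set.Icc (0 : ℝ) 1) : 0 ≤ noiseW q ε := fun z =>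
    show 0 ≤ noiseW q ε z by
  have hq : (1 : ℝ) < q := by exact_mod_cast (Fact.out : q.Prime).one_lt
  unfold noiseW
  split_ifs
  · linarith [hε.2]
  · exact div_nonneg hε.1 (by linarith)

variable (q ε) in
lemma sum_noiseW_ne_zero : ∑ z with z ≠ 0, noiseW q ε z = ε := by
  have hq : (1 : ℝ) < q := by exact_mod_cast (Fact.out : q.Prime).one_lt
  have hcard : #{z : ZMod q | z ≠ 0} = q - 1 := by
    rw [filter_ne', card_erase_of_mem (mem_univ _), card_univ, ZMod.card]
  rw [sum_congr rfl fun z hz => by rw [noiseW, if_neg (mem_filter.mp hz).2], sum_const, hcard,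
    nsmul_eq_mul, Nat.cast_sub (Fact.out : q.Prime).one_le, Nat.cast_one]
  field_simp [(by linarith : (q : ℝ) - 1 ≠ 0)]

variable (q ε) in
lemma sum_noiseW : ∑ z, noiseW q ε z = 1 := by
  rw [← sum_filter_add_sum_filter_not univ (· ≠ 0), sum_noiseW_ne_zero]
  simp [filter_eq', noiseW]

end Noise

lemma AddMonoidHom.card_fiber_mul_card {G H : Type*} [AddGroup G] [Fintype G] [AddGroup H]
    [Fintype H] [DecidableEq H] {f : G →+ H} (hf : Function.Surjective f) (c : H) :
    #{g | f g = c} * Fintype.card H = Fintype.card G := by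
  have hfibers := card_eq_sum_card_fiberwise (s := univ) (t := univ) fun g _ => mem_univ (f g)
  rw [card_univ, sum_congr rfl fun b _ => card_fiber_eq_of_mem_range f (hf b) (hf c), sum_const,
    card_univ, smul_eq_mul] at hfibers
  rw [hfibers, mul_comm]

section Tensor

variable {q n d : ℕ} [Fact q.Prime]

lemma tinner_sub_right (M T T' : Tensor q n d) : tinner M (T - T') = tinner M T - tinner M T' :=
  dotProduct_sub M T T'

def tinnerLeft (D : Tensor q n d) : Tensor q n d →+ ZMod q :=
  AddMonoidHom.mk' (tinner · D) fun M M' => add_dotProduct M M' D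

lemma tinnerLeft_surjective {D : Tensor q n d} (hD : D ≠ 0) :
    Function.Surjective (tinnerLeft D) := fun c => by
  obtain ⟨i, hi⟩ := Function.ne_iff.mp hD
  refine ⟨Pi.single i (c / D i), ?_⟩
  change Pi.single i (c / D i) ⬝ᵥ D = c
  rw [single_dotProduct, div_mul_cancel₀ c hi]

lemma card_tinner_eq_mul {D : Tensor q n d} (hD : D ≠ 0) (c : ZMod q) :
    #{M : Tensor q n d | tinner M D = c} * q = Fintype.card (Tensor q n d) := by
  have hfiber := AddMonoidHom.card_fiber_mul_card (tinnerLeft_surjective hD) c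
  rwa [ZMod.card] at hfiber

lemma card_rankLE_le (r : ℕ) : #{T : Tensor q n d | rankLE q n d r T} ≤ q ^ (n * r * d) := by
  let factors : (Fin r → Fin d → Fin n → ZMod q) → Tensor q n d :=
    fun u idx => ∑ i, ∏ j, u i j (idx j)
  have hsub : ({T | rankLE q n d r T} : Finset (Tensor q n d)) ⊆ univ.image factors :=
      fun T hT => by
    obtain ⟨u, hu⟩ := (mem_filter.mp hT).2
    exact mem_image.mpr ⟨u, mem_univ _, funext fun idx => (hu idx).symm⟩
  calc #{T : Tensor q n d | rankLE q n d r T}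
      ≤ #(univ.image factors) := card_le_card hsub
    _ ≤ Fintype.card (Fin r → Fin d → Fin n → ZMod q) := card_image_le
    _ = q ^ (n * r * d) := by simp only [Fintype.card_fun, ZMod.card, Fintype.card_fin]; ring

end Tensor

lemma hammingDist_add_eq_card {ι G : Type*} [Fintype ι] [AddCommGroup G] [DecidableEq G]
    (x y z : ι → G) : hammingDist x (fun i => y i + z i) = #{i | x i - y i ≠ z i} := by
  simp only [hammingDist, ne_eq, sub_eq_iff_eq_add']

section Sampling

variable {q n d : ℕ} [Fact q.Prime] {ε : ℝ}

/-- The law of one measurement `(M, z)`: a uniform sensing tensor and independent noise. -/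
noncomputable def sampleW (q n d : ℕ) [Fact q.Prime] (ε : ℝ) (x : Tensor q n d × ZMod q) : ℝ :=
  noiseW q ε x.2 / Fintype.card (Tensor q n d)

lemma sampleW_nonneg (hε : ε ∈ Set.Icc (0 : ℝ) 1) : 0 ≤ sampleW q n d ε := fun x =>
  div_nonneg (noiseW_nonneg hε x.2) (Nat.cast_nonneg _)

lemma sum_sampleW_filter (R : Tensor q n d → ZMod q → Prop) [∀ M c, Decidable (R M c)] :
    ∑ x with R x.1 x.2, sampleW q n d ε x
      = ∑ c, noiseW q ε c * (#{M | R M c} / Fintype.card (Tensor q n d)) := by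
  rw [sum_filter, Fintype.sum_prod_type_right]
  refine sum_congr rfl fun c _ => ?_
  simp only [← sum_filter, sampleW, sum_const, nsmul_eq_mul]
  ring

lemma sum_sampleW : ∑ x, sampleW q n d ε x = 1 := by
  simpa [sum_noiseW] using sum_sampleW_filter (q := q) (n := n) (d := d) (ε := ε) fun _ _ => True

lemma sum_sampleW_noise_ne_zero : ∑ x with x.2 ≠ 0, sampleW q n d ε x = ε := by
  rw [sum_sampleW_filter fun _ c => c ≠ 0]
  refine Eq.trans ?_ (sum_noiseW_ne_zero q ε)
  rw [sum_filter]
  refine sum_congr rfl fun c _ => ?_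
  split_ifs with hc <;> simp [hc]

lemma sum_sampleW_tinner_ne {D : Tensor q n d} (hD : D ≠ 0) :
    ∑ x with tinner x.1 D ≠ x.2, sampleW q n d ε x = ((q : ℝ) - 1) / q := by
  have hq : (0 : ℝ) < q := by exact_mod_cast (Fact.out : q.Prime).pos
  have hQ : (0 : ℝ) < Fintype.card (Tensor q n d) := by exact_mod_cast Fintype.card_pos
  have hfiber : ∀ c : ZMod q, (#{M : Tensor q n d | tinner M D ≠ c} : ℝ)
      / Fintype.card (Tensor q n d) = ((q : ℝ) - 1) / q := fun c => by
    have hsplit : (#{M : Tensor q n d | tinner M D = c} : ℝ)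
        + #{M : Tensor q n d | tinner M D ≠ c} = Fintype.card (Tensor q n d) := by
      exact_mod_cast card_filter_add_card_filter_not (s := univ) fun M => tinner M D = c
    have hmul : (#{M : Tensor q n d | tinner M D = c} : ℝ) * q = Fintype.card (Tensor q n d) := by
      exact_mod_cast card_tinner_eq_mul hD c
    rw [div_eq_div_iff hQ.ne' hq.ne']
    linear_combination (q : ℝ) * hsplit - hmul
  rw [sum_sampleW_filter fun M c => tinner M D ≠ c]
  simp only [hfiber, ← sum_mul, sum_noiseW, one_mul]

end Sampling

section Decoding

variable {q n d : ℕ} [Fact q.Prime] {ε η : ℝ}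

lemma iidProb_floor_lt_hammingDist_noise_le (hε : ε ∈ Set.Icc (0 : ℝ) 1) (hεη : ε ≤ η)
    (T : Tensor q n d) (N : ℕ) :
    iidProb (sampleW q n d ε) N (fun ζ => ⌊η * N⌋₊ < hammingDist (fun k => tinner (ζ k).1 T)
        (fun k => tinner (ζ k).1 T + (ζ k).2)) ≤ exp (-(2 * (η - ε) ^ 2 * N)) := by
  refine (iidProb_mono (sampleW_nonneg hε) fun ζ hζ => ?_).trans
    (iidProb_add_mul_le_card_le (sampleW_nonneg hε) sum_sampleW (fun x => x.2 ≠ 0)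
      (sub_nonneg.mpr hεη))
  simp only [hammingDist_add_eq_card, sub_self, ne_comm] at hζ
  rw [sum_sampleW_noise_ne_zero, add_sub_cancel]
  exact (Nat.lt_floor_add_one _).le.trans (by exact_mod_cast hζ)

lemma iidProb_hammingDist_le_floor_le (hε : ε ∈ Set.Icc (0 : ℝ) 1)
    (hη : η ∈ Set.Icc 0 (((q : ℝ) - 1) / q)) {T T' : Tensor q n d} (hT : T ≠ T') (N : ℕ) :
    iidProb (sampleW q n d ε) N (fun ζ => hammingDist (fun k => tinner (ζ k).1 T)
        (fun k => tinner (ζ k).1 T' + (ζ k).2) ≤ ⌊η * N⌋₊)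
      ≤ exp (-(2 * (((q : ℝ) - 1) / q - η) ^ 2 * N)) := by
  refine (iidProb_mono (sampleW_nonneg hε) fun ζ hζ => ?_).trans
    (iidProb_card_le_sub_mul_le (sampleW_nonneg hε) sum_sampleW
      (fun x => tinner x.1 (T - T') ≠ x.2) (sub_nonneg.mpr hη.2))
  simp only [hammingDist_add_eq_card, ← tinner_sub_right] at hζ
  rw [sum_sampleW_tinner_ne (sub_ne_zero.mpr hT), sub_sub_cancel]
  exact (Nat.cast_le.mpr hζ).trans (Nat.floor_le (by have := hη.1; positivity))

lemma iidProb_decodingError_le (hε : ε ∈ Set.Icc (0 : ℝ) 1) (hεη : ε ≤ η)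
    (hη : η ≤ ((q : ℝ) - 1) / q) (r : ℕ) (Tstar : Tensor q n d) (N : ℕ) :
    iidProb (sampleW q n d ε) N (fun ζ =>
        ⌊η * N⌋₊ < hammingDist (fun k => tinner (ζ k).1 Tstar)
          (fun k => tinner (ζ k).1 Tstar + (ζ k).2) ∨
        ∃ T : Tensor q n d, T ≠ Tstar ∧ rankLE q n d r T ∧
          hammingDist (fun k => tinner (ζ k).1 T) (fun k => tinner (ζ k).1 Tstar + (ζ k).2)
            ≤ ⌊η * N⌋₊)
      ≤ exp (-(2 * (η - ε) ^ 2 * N))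
        + q ^ (n * r * d) * exp (-(2 * (((q : ℝ) - 1) / q - η) ^ 2 * N)) := by
  have hw := sampleW_nonneg (q := q) (n := n) (d := d) hε
  set s : Finset (Tensor q n d) := {T | rankLE q n d r T ∧ T ≠ Tstar}
  have hsub : s ⊆ ({T | rankLE q n d r T} : Finset _) := fun T hT => by simp_all [s]
  have hs : (#s : ℝ) ≤ q ^ (n * r * d) := by
    exact_mod_cast (card_le_card hsub).trans (card_rankLE_le r)
  refine (iidProb_or_le hw _ _).trans
    (add_le_add (iidProb_floor_lt_hammingDist_noise_le hε hεη Tstar N) ?_)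
  calc _ ≤ iidProb (sampleW q n d ε) N (fun ζ => ∃ T ∈ s, hammingDist
          (fun k => tinner (ζ k).1 T) (fun k => tinner (ζ k).1 Tstar + (ζ k).2) ≤ ⌊η * N⌋₊) :=
        iidProb_mono hw fun ζ ⟨T, hne, hrank, hdist⟩ => ⟨T, by simp [s, hne, hrank], hdist⟩
    _ ≤ ∑ T ∈ s, iidProb (sampleW q n d ε) N (fun ζ => hammingDist
          (fun k => tinner (ζ k).1 T) (fun k => tinner (ζ k).1 Tstar + (ζ k).2) ≤ ⌊η * N⌋₊) :=
        iidProb_exists_le hw s _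
    _ ≤ ∑ _T ∈ s, exp (-(2 * (((q : ℝ) - 1) / q - η) ^ 2 * N)) := sum_le_sum fun T hT =>
        iidProb_hammingDist_le_floor_le hε ⟨hε.1.trans hεη, hη⟩ (mem_filter.mp hT).2.2 N
    _ ≤ _ := by rw [sum_const, nsmul_eq_mul]; gcongr

end Decoding

lemma tendsto_exp_add_pow_mul_exp {q a b C : ℝ} (hq : 1 < q) (ha : 0 < a) (hb : 0 < b)
    (hC : 1 < C) {K N : ℕ → ℕ} (hK : Tendsto K atTop atTop)
    (hN : ∀ᶠ n in atTop, C * (log q / b) * K n ≤ N n) :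
    Tendsto (fun n => exp (-(a * N n)) + q ^ K n * exp (-(b * N n))) atTop (𝓝 0) := by
  have hlog : 0 < log q := log_pos hq
  have hKreal : Tendsto (fun n => (K n : ℝ)) atTop atTop := tendsto_natCast_atTop_atTop.comp hK
  have hNreal : Tendsto (fun n => (N n : ℝ)) atTop atTop :=
    tendsto_atTop_mono' _ hN (hKreal.const_mul_atTop (by positivity))
  have hfirst : Tendsto (fun n => exp (-(a * N n))) atTop (𝓝 0) :=
    tendsto_exp_neg_atTop_nhds_zero.comp (hNreal.const_mul_atTop ha)
  -- `q ^ K = exp (K log q)` is beaten by `exp (-b N)` since `b N ≥ C K log q` with `C > 1`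
  have hsecond_le : ∀ᶠ n in atTop,
      q ^ K n * exp (-(b * N n)) ≤ exp (-((C - 1) * log q * K n)) := hN.mono fun n hn => by
    have hbN : C * log q * K n ≤ b * N n := by
      have := mul_le_mul_of_nonneg_left hn hb.le
      rwa [show b * (C * (log q / b) * K n) = C * log q * K n by field_simp] at this
    rw [← rpow_natCast, rpow_def_of_pos (by linarith), ← exp_add, exp_le_exp]
    linarith
  have hsecond : Tendsto (fun n => q ^ K n * exp (-(b * N n))) atTop (𝓝 0) :=
    squeeze_zero' (Eventually.of_forall fun n => by have := hq.le; positivity) hsecond_le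
      (tendsto_exp_neg_atTop_nhds_zero.comp (hKreal.const_mul_atTop (by nlinarith)))
  simpa using hfirst.add hsecond

theorem prob_error_noisy_tendsto_zero_general (q d r : ℕ) [Fact q.Prime] (hd : 2 ≤ d) (hr : 1 ≤ r)
    (ε η : ℝ) (hε0 : 0 ≤ ε) (hεη : ε < η) (hη : η < ((q : ℝ) - 1) / q)
    (C₂ : ℝ) (hC₂ : 1 < C₂)
    (Tstar : ∀ n : ℕ, Tensor q n d)
    (m : ℕ → ℕ)
    (hm : ∀ n : ℕ, 1 ≤ n →
      (C₂ * (Real.log q / (2 * (((q : ℝ) - 1) / q - η) ^ 2)) * n * r * d : ℝ) ≤ m n) :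
    Filter.Tendsto
      (fun n : ℕ =>
        (∑ M : Fin (m n) → Tensor q n d, ∑ z : Fin (m n) → ZMod q,
            (∏ k, noiseW q ε (z k)) *
              (if (⌊η * m n⌋₊ < hammingDist (fun k => tinner (M k) (Tstar n))
                      (fun k => tinner (M k) (Tstar n) + z k) ∨
                    ∃ T : Tensor q n d, T ≠ Tstar n ∧ rankLE q n d r T ∧
                      hammingDist (fun k => tinner (M k) T)
                        (fun k => tinner (M k) (Tstar n) + z k) ≤ ⌊η * m n⌋₊)
                then 1 else 0)) /
          (Fintype.card (Tensor q n d) : ℝ) ^ (m n))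
      Filter.atTop (nhds 0) := by
  have hq : (1 : ℝ) < q := by exact_mod_cast (Fact.out : q.Prime).one_lt
  have hε : ε ∈ Set.Icc (0 : ℝ) 1 :=
    ⟨hε0, by linarith [div_le_one_of_le₀ (by linarith : (q : ℝ) - 1 ≤ q) (by positivity)]⟩
  have hK : Tendsto (fun n => n * r * d) atTop atTop :=
    tendsto_atTop_mono (fun n => (Nat.le_mul_of_pos_right n hr).trans
      (Nat.le_mul_of_pos_right _ (by omega))) tendsto_id
  have hlim := tendsto_exp_add_pow_mul_exp hq (a := 2 * (η - ε) ^ 2) (by nlinarith)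
    (b := 2 * (((q : ℝ) - 1) / q - η) ^ 2) (by nlinarith) hC₂ hK
    (eventually_atTop.2 ⟨1, fun n hn => (hm n hn).trans_eq' (by push_cast; ring)⟩)
  refine squeeze_zero (fun n => ?_) (fun n => ?_) hlim <;> rw [← iidProb_prod_uniform]
  · exact iidProb_nonneg (sampleW_nonneg hε) _
  · exact iidProb_decodingError_le hε hεη.le hη.le r (Tstar n) (m n)

/-- **Theorem 4 (Achievability II, noisy).** Fix a prime `q`, `d ≥ 2`, `r ≥ 1`, reals
`0 ≤ ε < η < (q−1)/q` and a constant `C₂ > 1`; set `γ = ln q / (2((q−1)/q − η)²)`.  For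
each `n`, let `T*_n` have rank at most `r`, let `m n ≥ C₂·γ·n·r·d`, draw `m n` i.i.d.
uniform sensing tensors and `q`-ary symmetric noise (`ỹ = y_{T*_n} + z`), and set
`τ_n = ⌊η·m n⌋`.  The probability of the error event `E_n` — that `d_H(y_{T*_n}, ỹ) > τ_n`
or some `T ≠ T*_n` of rank at most `r` has `d_H(y_T, ỹ) ≤ τ_n` — tends to `0` as
`n → ∞`. -/
theorem prob_error_noisy_tendsto_zero (q d r : ℕ) [Fact q.Prime] (hd : 2 ≤ d) (hr : 1 ≤ r)
    (ε η : ℝ) (hε0 : 0 ≤ ε) (hεη : ε < η) (hη : η < ((q : ℝ) - 1) / q)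
    (C₂ : ℝ) (hC₂ : 1 < C₂)
    (Tstar : ∀ n : ℕ, Tensor q n d) (hTstar : ∀ n, rankLE q n d r (Tstar n))
    (m : ℕ → ℕ)
    (hm : ∀ n : ℕ, 1 ≤ n →
      (C₂ * (Real.log q / (2 * (((q : ℝ) - 1) / q - η) ^ 2)) * n * r * d : ℝ) ≤ m n) :
    Filter.Tendsto
      (fun n : ℕ =>
        (∑ M : Fin (m n) → Tensor q n d, ∑ z : Fin (m n) → ZMod q,
            (∏ k, noiseW q ε (z k)) *
              (if (⌊η * m n⌋₊ < hammingDist (fun k => tinner (M k) (Tstar n))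
                      (fun k => tinner (M k) (Tstar n) + z k) ∨
                    ∃ T : Tensor q n d, T ≠ Tstar n ∧ rankLE q n d r T ∧
                      hammingDist (fun k => tinner (M k) T)
                        (fun k => tinner (M k) (Tstar n) + z k) ≤ ⌊η * m n⌋₊)
                then 1 else 0)) /
          (Fintype.card (Tensor q n d) : ℝ) ^ (m n))
      Filter.atTop (nhds 0) :=
  prob_error_noisy_tendsto_zero_general q d r hd hr ε η hε0 hεη hη C₂ hC₂ Tstar m hm
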